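/- arXiv:1911.00749 — 3 statements merged into one kernel-verified Lean document; each statement's English description precedes it below -/
import Mathlib

section
/- There exists a constant C > 0 such that for every φ ∈ C^∞([0,1], ℂ) satisfying φ(1) = φ'(1) = 0, lim_{r→0⁺} (𝓛^k φ)(r) = 0 and lim_{r→0⁺} (d/dr)(r (𝓛^k φ)(r)) = 0 for all nonnegative integers k, one has ∫₀¹ |φ(r)|² (1/r) dr + ∫₀¹ |φ'(r)|² r dr ≤ C ∫₀¹ |𝓛φ(r)|² r dr. -/
open MeasureTheory Set

/-- The operator `(𝓛 g)(r) = g''(r) + g'(r)/r − g(r)/r²`. -/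
noncomputable def Lop (g : ℝ → ℂ) : ℝ → ℂ := fun r =>
  deriv (deriv g) r + deriv g r / (r : ℂ) - g r / (r : ℂ) ^ 2

/-- The Hagen–Poiseuille profile `Ū(r) = (2Φ/π)(1 − r²)`. -/
noncomputable def Ubar (Φ : ℝ) (r : ℝ) : ℝ := (2 * Φ / Real.pi) * (1 - r ^ 2)

/-- The operator `𝓛 − ξ²`. -/
noncomputable def LopXi (ξ : ℝ) (g : ℝ → ℂ) : ℝ → ℂ := fun r =>
  Lop g r - (ξ : ℂ) ^ 2 * g r

open Filter
open scoped ContDiff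

lemma aux_bdd {f : ℝ → ℝ} (hc : ContinuousOn f (Ioi 0))
    (h0 : Filter.Tendsto f (nhdsWithin (0:ℝ) (Ioi 0)) (nhds 0)) :
    ∃ C : ℝ, ∀ r ∈ Ioc (0:ℝ) 1, |f r| ≤ C := by
  obtain ⟨δ, hδ, hδ1⟩ := Metric.tendsto_nhdsWithin_nhds.mp h0 1 one_pos
  have hδ' : (0:ℝ) < min δ 1 := lt_min hδ one_pos
  obtain ⟨C, hC⟩ := (isCompact_Icc (a := min δ 1) (b := 1)).exists_bound_of_continuousOn
      (hc.mono (fun x hx => lt_of_lt_of_le hδ' hx.1))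
  refine ⟨max C 1, fun r hr => ?_⟩
  rcases lt_or_ge r (min δ 1) with h | h
  · have := hδ1 hr.1 (by
      rw [Real.dist_eq, sub_zero, abs_of_pos hr.1]
      exact h.trans_le (min_le_left _ _))
    rw [Real.dist_eq, sub_zero] at this
    exact le_max_of_le_right this.le
  · exact le_max_of_le_left (by simpa [Real.norm_eq_abs] using hC r ⟨h, hr.2⟩)

lemma aux_int {f : ℝ → ℝ} (hm : Measurable f) (hc : ContinuousOn f (Ioi 0))
    (h0 : Filter.Tendsto f (nhdsWithin (0:ℝ) (Ioi 0)) (nhds 0)) :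
    IntegrableOn f (Ioo (0:ℝ) 1) := by
  obtain ⟨C, hC⟩ := aux_bdd hc h0
  apply Measure.integrableOn_of_bounded (M := C)
  · simp [Real.volume_Ioo]
  · exact hm.aestronglyMeasurable
  · filter_upwards [ae_restrict_mem measurableSet_Ioo] with r hr
    exact (Real.norm_eq_abs _ ▸ hC r ⟨hr.1, hr.2.le⟩)

theorem stmt_5 :
    ∃ C : ℝ, 0 < C ∧
      ∀ φ : ℝ → ℂ,
        ContDiff ℝ (⊤ : ℕ∞) φ →
        φ 1 = 0 → deriv φ 1 = 0 →
        (∀ k : ℕ,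
          Filter.Tendsto (Lop^[k] φ) (nhdsWithin (0 : ℝ) (Ioi 0)) (nhds 0)) →
        (∀ k : ℕ,
          Filter.Tendsto (fun r : ℝ => deriv (fun s : ℝ => (s : ℂ) * (Lop^[k] φ) s) r)
            (nhdsWithin (0 : ℝ) (Ioi 0)) (nhds 0)) →
        (∫ r in Ioo (0 : ℝ) 1, ‖φ r‖ ^ 2 / r)
          + (∫ r in Ioo (0 : ℝ) 1, ‖deriv φ r‖ ^ 2 * r)
        ≤ C * ∫ r in Ioo (0 : ℝ) 1, ‖Lop φ r‖ ^ 2 * r := by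
  refine ⟨1, one_pos, ?_⟩
  intro φ hφ hφ1 hφ'1 hlim hlim'
  have hφc : Continuous φ := hφ.continuous
  have hphiI : ContDiff ℝ ∞ φ := hφ.of_le (by simp)
  have hφ's : ContDiff ℝ ∞ (deriv φ) := (contDiff_infty_iff_deriv.mp hphiI).2
  have hφ'c : Continuous (deriv φ) := hφ's.continuous
  have hφ''c : Continuous (deriv (deriv φ)) := (contDiff_infty_iff_deriv.mp hφ's).2.continuous
  have hdφ : ∀ r : ℝ, HasDerivAt φ (deriv φ r) r := fun r =>
    (hphiI.differentiable (by norm_num) r).hasDerivAt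
  have hdφ' : ∀ r : ℝ, HasDerivAt (deriv φ) (deriv (deriv φ) r) r := fun r =>
    (hφ's.differentiable (by norm_num) r).hasDerivAt
  -- φ 0 = 0
  have hφ0 : φ 0 = 0 := by
    have h1 : Filter.Tendsto φ (nhdsWithin 0 (Ioi 0)) (nhds (φ 0)) :=
      (hφc.tendsto 0).mono_left nhdsWithin_le_nhds
    have h2 := hlim 0
    simp only [Function.iterate_zero, id] at h2
    exact tendsto_nhds_unique h1 h2
  have hL0 : Filter.Tendsto (Lop φ) (nhdsWithin (0:ℝ) (Ioi 0)) (nhds 0) := by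
    have := hlim 1; simpa using this
  -- continuity of Lop φ on (0, ∞)
  have hLc : ContinuousOn (Lop φ) (Ioi (0:ℝ)) := by
    have hne : ∀ x ∈ Ioi (0:ℝ), (x:ℂ) ≠ 0 := fun x hx => by
      exact_mod_cast ne_of_gt (show (0:ℝ) < x from hx)
    apply ContinuousOn.sub
    · exact hφ''c.continuousOn.add
        (hφ'c.continuousOn.div Complex.continuous_ofReal.continuousOn hne)
    · exact hφc.continuousOn.div (Complex.continuous_ofReal.continuousOn.pow 2)
        (fun x hx => pow_ne_zero 2 (hne x hx))
  -- measurability of Lop φ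
  have hLm : Measurable (Lop φ) := by
    apply Measurable.sub
    · exact hφ''c.measurable.add (hφ'c.measurable.div Complex.measurable_ofReal)
    · exact hφc.measurable.div (Complex.measurable_ofReal.pow_const 2)
  -- slope limit
  have hslope : Filter.Tendsto (fun r : ℝ => φ r / (r:ℂ)) (nhdsWithin 0 (Ioi 0))
      (nhds (deriv φ 0)) := by
    have h := hasDerivAt_iff_tendsto_slope.mp (hdφ 0)
    have h2 := h.mono_left (nhdsWithin_mono 0 (fun x hx => ne_of_gt hx))
    refine h2.congr' ?_
    filter_upwards [self_mem_nhdsWithin] with r _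
    simp [slope_def_field, hφ0, div_eq_inv_mul, Complex.real_smul, Complex.ofReal_inv, slope]
  -- limits of the integrands at 0⁺
  have hF1lim : Filter.Tendsto (fun r : ℝ => ‖φ r‖^2 / r) (nhdsWithin 0 (Ioi 0)) (nhds 0) := by
    have h2 : Filter.Tendsto (fun r : ℝ => ‖φ r / (r:ℂ)‖ * ‖φ r‖) (nhdsWithin 0 (Ioi 0))
        (nhds (‖deriv φ 0‖ * ‖φ 0‖)) :=
      hslope.norm.mul (((hφc.norm).tendsto 0).mono_left nhdsWithin_le_nhds)
    rw [hφ0] at h2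
    simp only [norm_zero, mul_zero] at h2
    refine h2.congr' ?_
    filter_upwards [self_mem_nhdsWithin] with r hr
    have hr0 : (0:ℝ) < r := hr
    rw [norm_div, Complex.norm_real, Real.norm_eq_abs, abs_of_pos hr0]
    field_simp
  have hF3lim : Filter.Tendsto (fun r : ℝ => ((r:ℂ) * Lop φ r * (starRingEnd ℂ) (φ r)).re)
      (nhdsWithin 0 (Ioi 0)) (nhds 0) := by
    have hr : Filter.Tendsto (fun r : ℝ => (r:ℂ)) (nhdsWithin 0 (Ioi 0)) (nhds 0) := by
      have := (Complex.continuous_ofReal.tendsto 0).mono_left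
        (nhdsWithin_le_nhds (s := Ioi (0:ℝ)))
      simpa using this
    have hconj : Filter.Tendsto (fun r : ℝ => (starRingEnd ℂ) (φ r)) (nhdsWithin 0 (Ioi 0))
        (nhds 0) := by
      have := ((Complex.continuous_conj.comp hφc).tendsto 0).mono_left
        (nhdsWithin_le_nhds (s := Ioi (0:ℝ)))
      simpa [hφ0, Function.comp_def] using this
    have h := (hr.mul hL0).mul hconj
    have h2 := (Complex.continuous_re.tendsto 0).comp (by simpa using h)
    simpa [Function.comp_def] using h2
  -- boundary function B and the derivative identity
  set B : ℝ → ℝ := fun r => ((r:ℂ) * deriv φ r * (starRingEnd ℂ) (φ r)).re with hBdef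
  set G : ℝ → ℝ := fun r => ((r:ℂ) * Lop φ r * (starRingEnd ℂ) (φ r)).re
      + ‖deriv φ r‖^2 * r + ‖φ r‖^2 / r with hGdef
  have hnormSq : ∀ z : ℂ, Complex.normSq z = ‖z‖^2 := fun z => by
    rw [Complex.sq_norm]
  have hBderiv : ∀ r ∈ Ioo (0:ℝ) 1, HasDerivAt B (G r) r := by
    intro r hr
    have hr0 : r ≠ 0 := ne_of_gt hr.1
    have hrC : (r:ℂ) ≠ 0 := by exact_mod_cast hr0
    have hofReal : HasDerivAt (fun s : ℝ => (s:ℂ)) 1 r := by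
      simpa using (hasDerivAt_id r).ofReal_comp
    have h1 : HasDerivAt (fun s : ℝ => (s:ℂ) * deriv φ s)
        (1 * deriv φ r + (r:ℂ) * deriv (deriv φ) r) r := hofReal.mul (hdφ' r)
    have hstar : HasDerivAt (fun s => (starRingEnd ℂ) (φ s)) ((starRingEnd ℂ) (deriv φ r)) r := by
      simpa [RCLike.star_def] using (hdφ r).star
    have h2 := h1.mul hstar
    have h3 := (Complex.reCLM.hasFDerivAt
      (x := (r:ℂ) * deriv φ r * (starRingEnd ℂ) (φ r))).comp_hasDerivAt r h2
    have key : Complex.reCLM (((1:ℂ) * deriv φ r + (r:ℂ) * deriv (deriv φ) r) * (starRingEnd ℂ) (φ r)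
        + (r:ℂ) * deriv φ r * (starRingEnd ℂ) (deriv φ r)) = G r := by
      have e0 : ((1:ℂ) * deriv φ r + (r:ℂ) * deriv (deriv φ) r) * (starRingEnd ℂ) (φ r)
          + (r:ℂ) * deriv φ r * (starRingEnd ℂ) (deriv φ r)
          = (r:ℂ) * Lop φ r * (starRingEnd ℂ) (φ r)
            + (r:ℂ) * (deriv φ r * (starRingEnd ℂ) (deriv φ r))
            + (φ r * (starRingEnd ℂ) (φ r)) / (r:ℂ) := by
        simp only [Lop]
        field_simp
        ring
      rw [e0, Complex.mul_conj, Complex.mul_conj]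
      simp only [map_add, Complex.reCLM_apply, Complex.add_re]
      rw [← Complex.ofReal_mul, ← Complex.ofReal_div, Complex.ofReal_re, Complex.ofReal_re,
        hGdef, hnormSq, hnormSq]
      ring
    rw [← key, hBdef]
    simpa only [Function.comp_def, Complex.reCLM_apply, Pi.mul_apply] using h3
  -- integrability of all pieces
  have hI1 : IntegrableOn (fun r => ‖φ r‖^2 / r) (Ioo (0:ℝ) 1) :=
    aux_int (((hφc.norm.pow 2).measurable).div measurable_id)
      (((hφc.norm.pow 2).continuousOn).div continuousOn_id (fun x hx => ne_of_gt hx)) hF1lim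
  have hI2 : IntegrableOn (fun r => ‖deriv φ r‖^2 * r) (Ioo (0:ℝ) 1) := by
    apply aux_int (((hφ'c.norm.pow 2).mul continuous_id).measurable)
      (((hφ'c.norm.pow 2).mul continuous_id).continuousOn)
    have := (((hφ'c.norm.pow 2).mul continuous_id).tendsto 0).mono_left
      (nhdsWithin_le_nhds (s := Ioi (0:ℝ)))
    simpa using this
  have hI3 : IntegrableOn (fun r : ℝ => ((r:ℂ) * Lop φ r * (starRingEnd ℂ) (φ r)).re)
      (Ioo (0:ℝ) 1) := by
    apply aux_int
    · exact Complex.measurable_re.comp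
        ((Complex.measurable_ofReal.mul hLm).mul
          (Complex.continuous_conj.measurable.comp hφc.measurable))
    · exact Complex.continuous_re.comp_continuousOn
        ((Complex.continuous_ofReal.continuousOn.mul hLc).mul
          ((Complex.continuous_conj.comp hφc).continuousOn))
    · exact hF3lim
  have hF4lim : Filter.Tendsto (fun r : ℝ => ‖Lop φ r‖^2 * r) (nhdsWithin 0 (Ioi 0)) (nhds 0) := by
    have hid : Filter.Tendsto (fun r : ℝ => r) (nhdsWithin (0:ℝ) (Ioi 0)) (nhds 0) :=
      (continuous_id.tendsto 0).mono_left nhdsWithin_le_nhds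
    have := ((hL0.norm).pow 2).mul hid
    simpa using this
  have hI4 : IntegrableOn (fun r => ‖Lop φ r‖^2 * r) (Ioo (0:ℝ) 1) :=
    aux_int ((hLm.norm.pow_const 2).mul measurable_id)
      (((hLc.norm.pow 2)).mul continuousOn_id) hF4lim
  -- FTC
  have hGIoo : IntegrableOn G (Ioo (0:ℝ) 1) := (hI3.add hI2).add hI1
  have hGint : IntervalIntegrable G volume 0 1 := by
    rw [intervalIntegrable_iff_integrableOn_Ioo_of_le (by norm_num)]
    exact hGIoo
  have hBcont : ContinuousOn B (Icc (0:ℝ) 1) :=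
    (Complex.continuous_re.comp ((Complex.continuous_ofReal.mul hφ'c).mul
      (Complex.continuous_conj.comp hφc))).continuousOn
  have hFTC := intervalIntegral.integral_eq_sub_of_hasDerivAt_of_le (by norm_num)
    hBcont hBderiv hGint
  have hB1 : B 1 = 0 := by simp [hBdef, hφ1]
  have hB0 : B 0 = 0 := by simp [hBdef]
  have hGzero : ∫ r in Ioo (0:ℝ) 1, G r = 0 := by
    rw [intervalIntegral.integral_of_le (by norm_num : (0:ℝ) ≤ 1),
      integral_Ioc_eq_integral_Ioo, hB1, hB0, sub_zero] at hFTC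
    exact hFTC
  -- split the integral
  have hsplit : (∫ r in Ioo (0:ℝ) 1, ((r:ℂ) * Lop φ r * (starRingEnd ℂ) (φ r)).re)
      + (∫ r in Ioo (0:ℝ) 1, ‖deriv φ r‖^2 * r) + (∫ r in Ioo (0:ℝ) 1, ‖φ r‖^2 / r) = 0 := by
    have hadd2 : IntegrableOn (fun r : ℝ => ((r:ℂ) * Lop φ r * (starRingEnd ℂ) (φ r)).re
        + ‖deriv φ r‖^2 * r) (Ioo (0:ℝ) 1) := hI3.add hI2
    have hs1 := integral_add hadd2 hI1
    have hs2 := integral_add hI3 hI2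
    rw [hGdef] at hGzero
    rw [hs1, hs2] at hGzero
    exact hGzero
  have hneg : (∫ r in Ioo (0:ℝ) 1, -(((r:ℂ) * Lop φ r * (starRingEnd ℂ) (φ r)).re))
      = (∫ r in Ioo (0:ℝ) 1, ‖φ r‖^2 / r) + (∫ r in Ioo (0:ℝ) 1, ‖deriv φ r‖^2 * r) := by
    rw [integral_neg]
    linarith [hsplit]
  -- pointwise bound & monotonicity
  have hmono : (∫ r in Ioo (0:ℝ) 1, -(((r:ℂ) * Lop φ r * (starRingEnd ℂ) (φ r)).re))
      ≤ ∫ r in Ioo (0:ℝ) 1, (‖Lop φ r‖^2 * r / 2 + (‖φ r‖^2 / r) / 2) := by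
    apply setIntegral_mono_on hI3.neg ((hI4.div_const 2).add (hI1.div_const 2))
      measurableSet_Ioo
    intro r hr
    simp only [Pi.neg_apply, Pi.add_apply]
    have hr0 : (0:ℝ) < r := hr.1
    have h1 : -(((r:ℂ) * Lop φ r * (starRingEnd ℂ) (φ r)).re)
        ≤ ‖(r:ℂ) * Lop φ r * (starRingEnd ℂ) (φ r)‖ := by
      refine (neg_le_abs _).trans ?_
      exact Complex.abs_re_le_norm _
    have h2 : ‖(r:ℂ) * Lop φ r * (starRingEnd ℂ) (φ r)‖ = r * ‖Lop φ r‖ * ‖φ r‖ := by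
      rw [norm_mul, norm_mul, Complex.norm_real, Real.norm_eq_abs, abs_of_pos hr0,
        RCLike.norm_conj]
    have e : ‖φ r‖^2 / r * r = ‖φ r‖^2 := div_mul_cancel₀ _ (ne_of_gt hr0)
    have h7 : (r * ‖Lop φ r‖ * ‖φ r‖ * 2) * r
        ≤ (‖Lop φ r‖^2 * r + ‖φ r‖^2 / r) * r := by
      nlinarith [sq_nonneg (r * ‖Lop φ r‖ - ‖φ r‖), e, hr.2,
        mul_nonneg (mul_nonneg hr0.le (norm_nonneg (Lop φ r))) (norm_nonneg (φ r))]
    have h8 : r * ‖Lop φ r‖ * ‖φ r‖ * 2 ≤ ‖Lop φ r‖^2 * r + ‖φ r‖^2 / r :=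
      le_of_mul_le_mul_right h7 hr0
    linarith [h1, h2.le, h2.ge]
  have hhalf : (∫ r in Ioo (0:ℝ) 1, (‖Lop φ r‖^2 * r / 2 + (‖φ r‖^2 / r) / 2))
      = (∫ r in Ioo (0:ℝ) 1, ‖Lop φ r‖^2 * r) / 2 + (∫ r in Ioo (0:ℝ) 1, ‖φ r‖^2 / r) / 2 := by
    rw [integral_add (hI4.div_const 2) (hI1.div_const 2), integral_div, integral_div]
  have hI2nonneg : 0 ≤ ∫ r in Ioo (0:ℝ) 1, ‖deriv φ r‖^2 * r :=
    setIntegral_nonneg measurableSet_Ioo (fun r hr => mul_nonneg (sq_nonneg _) hr.1.le)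
  rw [one_mul]
  linarith [hneg, hmono, hhalf, hI2nonneg]
end

section
/- There exists a constant C > 0 such that for every φ ∈ C^∞([0,1], ℂ) satisfying φ(1) = φ'(1) = 0, lim_{r→0⁺} (𝓛^k φ)(r) = 0 and lim_{r→0⁺} (d/dr)(r (𝓛^k φ)(r)) = 0 for all nonnegative integers k, one has ∫₀¹ |(d/dr)(r (𝓛φ)(r))|² (1/r) dr + ∫₀¹ |𝓛φ(r)|² (1/r) dr + ∫₀¹ |(𝓛φ)'(r)|² r dr ≤ C ∫₀¹ ( |φ(r)|² + |𝓛φ(r)|² + |𝓛²φ(r)|² ) r dr. -/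
open MeasureTheory Set Filter
open scoped ContDiff

section helpers

lemma hasDerivAt_conj {u : ℝ → ℂ} {u' : ℂ} {r : ℝ} (h : HasDerivAt u u' r) :
    HasDerivAt (fun s => (starRingEnd ℂ) (u s)) ((starRingEnd ℂ) u') r := by
  exact (Complex.conjCLE.hasFDerivAt.comp_hasDerivAt r h)

lemma hasDerivAt_re {v : ℝ → ℂ} {v' : ℂ} {r : ℝ} (h : HasDerivAt v v' r) :
    HasDerivAt (fun s => (v s).re) v'.re r := by
  exact (Complex.reCLM.hasFDerivAt.comp_hasDerivAt r h)

lemma norm_sq_eq_re (z : ℂ) : ‖z‖ ^ 2 = (z * (starRingEnd ℂ) z).re := by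
  rw [Complex.mul_conj]
  simp [Complex.sq_norm]

lemma hasDerivAt_norm_sq {u : ℝ → ℂ} {u' : ℂ} {r : ℝ} (h : HasDerivAt u u' r) :
    HasDerivAt (fun s => ‖u s‖ ^ 2) (2 * (u' * (starRingEnd ℂ) (u r)).re) r := by
  have h1 : HasDerivAt (fun s => (u s * (starRingEnd ℂ) (u s)).re)
      ((u' * (starRingEnd ℂ) (u r) + u r * (starRingEnd ℂ) u').re) r :=
    hasDerivAt_re ((h.mul (hasDerivAt_conj h)))
  have h2 : (u' * (starRingEnd ℂ) (u r) + u r * (starRingEnd ℂ) u').re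
      = 2 * (u' * (starRingEnd ℂ) (u r)).re := by
    rw [Complex.add_re]
    have : (u r * (starRingEnd ℂ) u').re = (u' * (starRingEnd ℂ) (u r)).re := by
      rw [← Complex.conj_re (u r * (starRingEnd ℂ) u')]
      simp [mul_comm]
    rw [this]; ring
  rw [h2] at h1
  have h3 : (fun s => ‖u s‖ ^ 2) = fun s => (u s * (starRingEnd ℂ) (u s)).re :=
    funext fun s => norm_sq_eq_re (u s)
  rw [h3]
  exact h1

end helpers

section smooth

lemma lop_contDiffOn {u : ℝ → ℂ} (h : ContDiffOn ℝ ∞ u (Ioi (0:ℝ))) :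
    ContDiffOn ℝ ∞ (Lop u) (Ioi (0:ℝ)) := by
  have hcoe : ContDiff ℝ ∞ (fun r : ℝ => (r : ℂ)) := Complex.ofRealCLM.contDiff
  have h1 : ContDiffOn ℝ ∞ (deriv u) (Ioi (0:ℝ)) := h.deriv_of_isOpen isOpen_Ioi (by simp)
  have h2 : ContDiffOn ℝ ∞ (deriv (deriv u)) (Ioi (0:ℝ)) :=
    h1.deriv_of_isOpen isOpen_Ioi (by simp)
  have ha : ContDiffOn ℝ ∞ (fun r : ℝ => deriv u r / (r:ℂ)) (Ioi (0:ℝ)) := by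
    simp only [div_eq_mul_inv]
    exact h1.mul (hcoe.contDiffOn.inv
      (fun r hr => Complex.ofReal_ne_zero.mpr (ne_of_gt hr)))
  have hb : ContDiffOn ℝ ∞ (fun r : ℝ => u r / (r:ℂ)^2) (Ioi (0:ℝ)) := by
    simp only [div_eq_mul_inv]
    exact h.mul ((hcoe.contDiffOn.pow 2).inv
      (fun r hr => pow_ne_zero 2 (Complex.ofReal_ne_zero.mpr (ne_of_gt hr))))
  exact (h2.add ha).sub hb

end smooth



lemma re_mul_conj_comm (z w : ℂ) : (z * (starRingEnd ℂ) w).re = (w * (starRingEnd ℂ) z).re := by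
  have h : z * (starRingEnd ℂ) w = (starRingEnd ℂ) (w * (starRingEnd ℂ) z) := by
    rw [map_mul, Complex.conj_conj]; ring
  rw [h, Complex.conj_re]

lemma norm_sq_eq_re' (z : ℂ) : ‖z‖ ^ 2 = (z * (starRingEnd ℂ) z).re := by
  rw [Complex.mul_conj]
  simp [Complex.sq_norm]

lemma norm_add_sq_re' (z w : ℂ) :
    ‖z + w‖ ^ 2 = ‖z‖ ^ 2 + 2 * (z * (starRingEnd ℂ) w).re + ‖w‖ ^ 2 := by
  have h : (z + w) * (starRingEnd ℂ) (z + w)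
      = z * (starRingEnd ℂ) z + (z * (starRingEnd ℂ) w + w * (starRingEnd ℂ) z)
        + w * (starRingEnd ℂ) w := by
    rw [map_add]; ring
  rw [norm_sq_eq_re', norm_sq_eq_re', norm_sq_eq_re', h]
  simp only [Complex.add_re]
  rw [re_mul_conj_comm w z]
  ring

lemma abs_re_mul_conj (z w : ℂ) : |(z * (starRingEnd ℂ) w).re| ≤ ‖z‖ * ‖w‖ := by
  exact (Complex.abs_re_le_norm _).trans_eq (by rw [norm_mul, Complex.norm_conj])

set_option maxHeartbeats 2000000 in
theorem stmt_6 :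
    ∃ C : ℝ, 0 < C ∧
      ∀ φ : ℝ → ℂ,
        ContDiff ℝ (⊤ : ℕ∞) φ →
        φ 1 = 0 → deriv φ 1 = 0 →
        (∀ k : ℕ,
          Filter.Tendsto (Lop^[k] φ) (nhdsWithin (0 : ℝ) (Ioi 0)) (nhds 0)) →
        (∀ k : ℕ,
          Filter.Tendsto (fun r : ℝ => deriv (fun s : ℝ => (s : ℂ) * (Lop^[k] φ) s) r)
            (nhdsWithin (0 : ℝ) (Ioi 0)) (nhds 0)) →
        (∫ r in Ioo (0 : ℝ) 1, ‖deriv (fun s : ℝ => (s : ℂ) * Lop φ s) r‖ ^ 2 / r)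
          + (∫ r in Ioo (0 : ℝ) 1, ‖Lop φ r‖ ^ 2 / r)
          + (∫ r in Ioo (0 : ℝ) 1, ‖deriv (Lop φ) r‖ ^ 2 * r)
        ≤ C * ∫ r in Ioo (0 : ℝ) 1,
            (‖φ r‖ ^ 2 + ‖Lop φ r‖ ^ 2 + ‖Lop (Lop φ) r‖ ^ 2) * r := by
  refine ⟨1408452, by norm_num, ?_⟩
  intro φ hφ hφ1 hφ'1 hk hk'
  set f := Lop φ with hf_def
  set g := Lop f with hg_def
  -- smoothness
  have hphiC : ContDiffOn ℝ ∞ φ (Ioi (0:ℝ)) := (hφ.of_le (by simp)).contDiffOn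
  have hfC : ContDiffOn ℝ ∞ f (Ioi (0:ℝ)) := lop_contDiffOn hphiC
  have hf'C : ContDiffOn ℝ ∞ (deriv f) (Ioi (0:ℝ)) :=
    hfC.deriv_of_isOpen isOpen_Ioi (by simp)
  have hf''C : ContDiffOn ℝ ∞ (deriv (deriv f)) (Ioi (0:ℝ)) :=
    hf'C.deriv_of_isOpen isOpen_Ioi (by simp)
  have hgC : ContDiffOn ℝ ∞ g (Ioi (0:ℝ)) := lop_contDiffOn hfC
  have hfd : ∀ r ∈ Ioi (0:ℝ), HasDerivAt f (deriv f r) r := fun r hr =>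
    ((hfC.differentiableOn (by simp)).differentiableAt (isOpen_Ioi.mem_nhds hr)).hasDerivAt
  have hf'd : ∀ r ∈ Ioi (0:ℝ), HasDerivAt (deriv f) (deriv (deriv f) r) r := fun r hr =>
    ((hf'C.differentiableOn (by simp)).differentiableAt (isOpen_Ioi.mem_nhds hr)).hasDerivAt
  have hfc : ContinuousOn f (Ioi (0:ℝ)) := hfC.continuousOn
  have hf'c : ContinuousOn (deriv f) (Ioi (0:ℝ)) := hf'C.continuousOn
  have hf''c : ContinuousOn (deriv (deriv f)) (Ioi (0:ℝ)) := hf''C.continuousOn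
  have hgc : ContinuousOn g (Ioi (0:ℝ)) := hgC.continuousOn
  have hg_eq : ∀ r : ℝ, g r = deriv (deriv f) r + deriv f r / (r:ℂ) - f r / (r:ℂ)^2 :=
    fun r => rfl
  -- derivative of s ↦ s * f s
  have htfd : ∀ r ∈ Ioi (0:ℝ),
      HasDerivAt (fun s : ℝ => (s:ℂ) * f s) (f r + (r:ℂ) * deriv f r) r := by
    intro r hr
    have := Complex.ofRealCLM.hasDerivAt.mul (hfd r hr)
    exact this.congr_deriv (by simp)
  -- limits at 0⁺
  have hf0 : Tendsto f (nhdsWithin (0:ℝ) (Ioi 0)) (nhds 0) := by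
    simpa using hk 1
  have hg0 : Tendsto g (nhdsWithin (0:ℝ) (Ioi 0)) (nhds 0) := by
    have h2 : Lop^[2] φ = g := by
      rw [show (2:ℕ) = 1+1 from rfl, Function.iterate_succ_apply', Function.iterate_one]
    simpa [h2] using hk 2
  have htf0 : Tendsto (fun r : ℝ => f r + (r:ℂ) * deriv f r)
      (nhdsWithin (0:ℝ) (Ioi 0)) (nhds 0) := by
    have h1 := hk' 1
    rw [Function.iterate_one] at h1
    exact h1.congr' (eventuallyEq_of_mem self_mem_nhdsWithin
      (fun r hr => (htfd r hr).deriv))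
  have hτ0 : Tendsto (fun r : ℝ => ‖(r:ℂ) * deriv f r‖ * ‖f r‖)
      (nhdsWithin (0:ℝ) (Ioi 0)) (nhds 0) := by
    have hrf'0 : Tendsto (fun r : ℝ => (r:ℂ) * deriv f r)
        (nhdsWithin (0:ℝ) (Ioi 0)) (nhds 0) := by
      simpa using htf0.sub hf0
    simpa using hrf'0.norm.mul hf0.norm
  -- global bound on the data
  obtain ⟨M, hM0, hM⟩ : ∃ M : ℝ, 0 ≤ M ∧
      ∀ r ∈ Ioc (0:ℝ) 1, ‖φ r‖^2 + ‖f r‖^2 + ‖g r‖^2 ≤ M := by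
    obtain ⟨δf, hδf, hf1⟩ := Metric.tendsto_nhdsWithin_nhds.mp hf0 1 one_pos
    obtain ⟨δg, hδg, hg1⟩ := Metric.tendsto_nhdsWithin_nhds.mp hg0 1 one_pos
    set a : ℝ := min (min δf δg) 1 / 2 with ha_def
    have ha : 0 < a := by positivity
    have haIoi : Icc a 1 ⊆ Ioi (0:ℝ) := fun x hx => lt_of_lt_of_le ha hx.1
    obtain ⟨Cf, hCf⟩ := (isCompact_Icc (a := a) (b := 1)).exists_bound_of_continuousOn
      (hfc.mono haIoi)
    obtain ⟨Cg, hCg⟩ := (isCompact_Icc (a := a) (b := 1)).exists_bound_of_continuousOn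
      (hgc.mono haIoi)
    obtain ⟨Cφ, hCφ⟩ := (isCompact_Icc (a := (0:ℝ)) (b := 1)).exists_bound_of_continuousOn
      (hφ.continuous.continuousOn)
    refine ⟨(max Cφ 0)^2 + (max Cf 1)^2 + (max Cg 1)^2, by positivity, ?_⟩
    intro r hr
    have hφb : ‖φ r‖^2 ≤ (max Cφ 0)^2 := by
      have h1 : ‖φ r‖ ≤ max Cφ 0 :=
        le_trans (hCφ r ⟨hr.1.le, hr.2⟩) (le_max_left _ _)
      exact pow_le_pow_left₀ (norm_nonneg _) h1 2
    have hfb : ‖f r‖^2 ≤ (max Cf 1)^2 := by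
      have h1 : ‖f r‖ ≤ max Cf 1 := by
        rcases le_or_gt r a with hra | hra
        · have hd : dist r 0 < δf := by
            rw [Real.dist_eq, sub_zero, abs_of_pos hr.1]
            have h1 : min (min δf δg) 1 ≤ δf := le_trans (min_le_left _ _) (min_le_left _ _)
            have h2 : a < δf := by rw [ha_def]; linarith
            linarith
          have := hf1 hr.1 hd
          rw [dist_zero_right] at this
          exact le_trans this.le (le_max_right _ _)
        · exact le_trans (hCf r ⟨hra.le, hr.2⟩) (le_max_left _ _)
      exact pow_le_pow_left₀ (norm_nonneg _) h1 2
    have hgb : ‖g r‖^2 ≤ (max Cg 1)^2 := by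
      have h1 : ‖g r‖ ≤ max Cg 1 := by
        rcases le_or_gt r a with hra | hra
        · have hd : dist r 0 < δg := by
            rw [Real.dist_eq, sub_zero, abs_of_pos hr.1]
            have h1 : min (min δf δg) 1 ≤ δg :=
              le_trans (min_le_left _ _) (min_le_right _ _)
            have h2 : a < δg := by rw [ha_def]; linarith
            linarith
          have := hg1 hr.1 hd
          rw [dist_zero_right] at this
          exact le_trans this.le (le_max_right _ _)
        · exact le_trans (hCg r ⟨hra.le, hr.2⟩) (le_max_left _ _)
      exact pow_le_pow_left₀ (norm_nonneg _) h1 2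
    linarith
  set R := ∫ r in Ioo (0:ℝ) 1, (‖φ r‖^2 + ‖f r‖^2 + ‖g r‖^2) * r with hR_def
  have hRmeas : AEStronglyMeasurable (fun r => (‖φ r‖^2 + ‖f r‖^2 + ‖g r‖^2) * r)
      (volume.restrict (Ioo (0:ℝ) 1)) := by
    have hco : ContinuousOn (fun r => (‖φ r‖^2 + ‖f r‖^2 + ‖g r‖^2) * r) (Ioo (0:ℝ) 1) := by
      have h1 : ContinuousOn (fun r => ‖φ r‖^2 + ‖f r‖^2 + ‖g r‖^2) (Ioo (0:ℝ) 1) := by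
        have hsub : Ioo (0:ℝ) 1 ⊆ Ioi 0 := Ioo_subset_Ioi_self
        exact ((hφ.continuous.continuousOn.norm.pow 2).add
          ((hfc.mono hsub).norm.pow 2)).add ((hgc.mono hsub).norm.pow 2)
      exact h1.mul continuousOn_id
    exact hco.aestronglyMeasurable measurableSet_Ioo
  have hRint : IntegrableOn (fun r => (‖φ r‖^2 + ‖f r‖^2 + ‖g r‖^2) * r) (Ioo (0:ℝ) 1) := by
    refine Integrable.mono' (g := fun _ => M)
      (integrableOn_const measure_Ioo_lt_top.ne) hRmeas ?_
    rw [ae_restrict_iff' measurableSet_Ioo]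
    filter_upwards with r hr
    have hS : 0 ≤ ‖φ r‖^2 + ‖f r‖^2 + ‖g r‖^2 := by positivity
    rw [Real.norm_eq_abs, abs_of_nonneg (mul_nonneg hS hr.1.le)]
    calc (‖φ r‖^2 + ‖f r‖^2 + ‖g r‖^2) * r ≤ M * 1 :=
          mul_le_mul (hM r ⟨hr.1, hr.2.le⟩) hr.2.le hr.1.le hM0
      _ = M := mul_one M
  have hR0 : 0 ≤ R := setIntegral_nonneg measurableSet_Ioo (fun r hr => mul_nonneg (by positivity) hr.1.le)
  -- the main ε-uniform estimate
  have hmain : ∀ ε : ℝ, 0 < ε → ε ≤ 1/2 →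
      (∫ r in Ioo ε 1, ‖deriv (fun s : ℝ => (s:ℂ) * f s) r‖^2 / r)
      + (∫ r in Ioo ε 1, ‖f r‖^2 / r) + (∫ r in Ioo ε 1, ‖deriv f r‖^2 * r)
      ≤ 469484 * R + 4 * (‖(ε:ℂ) * deriv f ε‖ * ‖f ε‖) := by
    intro ε hε hε2
    have hε1 : ε ≤ 1 := by linarith
    have hsubI : Icc ε 1 ⊆ Ioi (0:ℝ) := fun x hx => lt_of_lt_of_le hε hx.1
    have hsubO : Ioo ε 1 ⊆ Ioi (0:ℝ) := fun x hx => lt_trans hε hx.1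
    have hsubH : Icc (1/2 : ℝ) 1 ⊆ Ioi (0:ℝ) := fun x hx => lt_of_lt_of_le one_half_pos hx.1
    have hsubOH : Ioo (1/2 : ℝ) 1 ⊆ Ioo ε 1 := Ioo_subset_Ioo hε2 le_rfl
    have hsubO01 : Ioo ε 1 ⊆ Ioo (0:ℝ) 1 := Ioo_subset_Ioo hε.le le_rfl
    -- continuity on Icc ε 1
    have cf : ContinuousOn f (Icc ε 1) := hfc.mono hsubI
    have cf' : ContinuousOn (deriv f) (Icc ε 1) := hf'c.mono hsubI
    have cg : ContinuousOn g (Icc ε 1) := hgc.mono hsubI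
    have cconjf : ContinuousOn (fun r => (starRingEnd ℂ) (f r)) (Icc ε 1) :=
      continuous_star.comp_continuousOn cf
    have cmid : ContinuousOn (fun r => 2*((deriv f r) * (starRingEnd ℂ) (f r)).re) (Icc ε 1) :=
      continuousOn_const.mul (Complex.continuous_re.comp_continuousOn (cf'.mul cconjf))
    have ch2 : ContinuousOn (fun r => ‖f r‖^2 / r) (Icc ε 1) :=
      (cf.norm.pow 2).div continuousOn_id (fun x hx => ne_of_gt (hsubI hx))
    have ch3 : ContinuousOn (fun r => ‖deriv f r‖^2 * r) (Icc ε 1) :=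
      (cf'.norm.pow 2).mul continuousOn_id
    have chG : ContinuousOn (fun r => r * ((g r) * (starRingEnd ℂ) (f r)).re) (Icc ε 1) :=
      continuousOn_id.mul (Complex.continuous_re.comp_continuousOn (cg.mul cconjf))
    -- integrability on Ioo ε 1
    have i2 : IntegrableOn (fun r => ‖f r‖^2 / r) (Ioo ε 1) :=
      (ch2.integrableOn_Icc).mono_set Ioo_subset_Icc_self
    have imid : IntegrableOn (fun r => 2*((deriv f r) * (starRingEnd ℂ) (f r)).re) (Ioo ε 1) :=
      (cmid.integrableOn_Icc).mono_set Ioo_subset_Icc_self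
    have i3 : IntegrableOn (fun r => ‖deriv f r‖^2 * r) (Ioo ε 1) :=
      (ch3.integrableOn_Icc).mono_set Ioo_subset_Icc_self
    have iG : IntegrableOn (fun r => r * ((g r) * (starRingEnd ℂ) (f r)).re) (Ioo ε 1) :=
      (chG.integrableOn_Icc).mono_set Ioo_subset_Icc_self
    -- FTC 1 : ∫ mid = ‖f 1‖² − ‖f ε‖²
    have key1 : (∫ r in Ioo ε 1, 2*((deriv f r) * (starRingEnd ℂ) (f r)).re)
        = ‖f 1‖^2 - ‖f ε‖^2 := by
      have hd : ∀ x ∈ uIcc ε 1, HasDerivAt (fun s => ‖f s‖^2)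
          (2*((deriv f x) * (starRingEnd ℂ) (f x)).re) x := by
        intro x hx
        rw [uIcc_of_le hε1] at hx
        exact hasDerivAt_norm_sq (hfd x (hsubI hx))
      have hi : IntervalIntegrable (fun r => 2*((deriv f r) * (starRingEnd ℂ) (f r)).re)
          volume ε 1 := (by rw [uIcc_of_le hε1]; exact cmid :
            ContinuousOn _ (uIcc ε 1)).intervalIntegrable
      have := intervalIntegral.integral_eq_sub_of_hasDerivAt hd hi
      rwa [intervalIntegral.integral_of_le hε1, integral_Ioc_eq_integral_Ioo] at this
    -- pointwise splitting of the first integrand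
    have hP1 : EqOn (fun r => ‖deriv (fun s : ℝ => (s:ℂ) * f s) r‖^2 / r)
        (fun r => ‖f r‖^2 / r + 2*((deriv f r) * (starRingEnd ℂ) (f r)).re
          + ‖deriv f r‖^2 * r) (Ioo ε 1) := by
      intro r hr
      have hrpos : (0:ℝ) < r := hsubO hr
      have hrne : (r:ℝ) ≠ 0 := ne_of_gt hrpos
      simp only
      rw [(htfd r hrpos).deriv, norm_add_sq_re']
      have e1 : ‖(r:ℂ) * deriv f r‖^2 = r^2 * ‖deriv f r‖^2 := by
        rw [norm_mul, mul_pow, Complex.norm_real, Real.norm_eq_abs, abs_of_pos hrpos]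
      have e2 : (f r * (starRingEnd ℂ) ((r:ℂ) * deriv f r)).re
          = r * ((deriv f r) * (starRingEnd ℂ) (f r)).re := by
        rw [map_mul, Complex.conj_ofReal]
        rw [show f r * ((r:ℂ) * (starRingEnd ℂ) (deriv f r))
            = (r:ℂ) * (f r * (starRingEnd ℂ) (deriv f r)) by ring]
        rw [Complex.re_ofReal_mul, re_mul_conj_comm]
      rw [e1, e2]
      field_simp
    have split1 : (∫ r in Ioo ε 1, ‖deriv (fun s : ℝ => (s:ℂ) * f s) r‖^2 / r)
        = (∫ r in Ioo ε 1, ‖f r‖^2 / r) + (‖f 1‖^2 - ‖f ε‖^2)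
          + (∫ r in Ioo ε 1, ‖deriv f r‖^2 * r) := by
      have iA : IntegrableOn (fun r => ‖f r‖^2 / r
          + 2*((deriv f r) * (starRingEnd ℂ) (f r)).re) (Ioo ε 1) := i2.add imid
      rw [setIntegral_congr_fun measurableSet_Ioo hP1]
      rw [integral_add iA i3, integral_add i2 imid, key1]
    -- FTC 2 (integration by parts)
    have key2 : (∫ r in Ioo ε 1, (r * ((g r) * (starRingEnd ℂ) (f r)).re
          + ‖f r‖^2 / r + ‖deriv f r‖^2 * r))
        = (((1:ℝ):ℂ) * deriv f 1 * (starRingEnd ℂ) (f 1)).re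
          - ((ε:ℂ) * deriv f ε * (starRingEnd ℂ) (f ε)).re := by
      have hdw : ∀ x ∈ uIcc ε 1,
          HasDerivAt (fun s : ℝ => (((s:ℂ) * deriv f s) * (starRingEnd ℂ) (f s)).re)
            (x * ((g x) * (starRingEnd ℂ) (f x)).re + ‖f x‖^2 / x + ‖deriv f x‖^2 * x) x := by
        intro x hx
        rw [uIcc_of_le hε1] at hx
        have hxpos : (0:ℝ) < x := hsubI hx
        have hx' : x ∈ Ioi (0:ℝ) := hxpos
        have hxne : (x:ℂ) ≠ 0 := Complex.ofReal_ne_zero.mpr (ne_of_gt hxpos)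
        have hmul : HasDerivAt (fun s : ℝ => (s:ℂ) * deriv f s)
            ((1:ℂ) * deriv f x + (x:ℂ) * deriv (deriv f) x) x := by
          exact (Complex.ofRealCLM.hasDerivAt.mul (hf'd x hx')).congr_deriv (by simp)
        have hinner := hasDerivAt_re (hmul.mul (hasDerivAt_conj (hfd x hx')))
        have hc : ((((1:ℂ) * deriv f x + (x:ℂ) * deriv (deriv f) x)
              * (starRingEnd ℂ) (f x))
              + ((x:ℂ) * deriv f x) * (starRingEnd ℂ) (deriv f x)).re
            = x * ((g x) * (starRingEnd ℂ) (f x)).re + ‖f x‖^2 / x + ‖deriv f x‖^2 * x := by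
          have hcc : (((1:ℂ) * deriv f x + (x:ℂ) * deriv (deriv f) x)
                * (starRingEnd ℂ) (f x))
                + ((x:ℂ) * deriv f x) * (starRingEnd ℂ) (deriv f x)
              = (x:ℂ) * (g x * (starRingEnd ℂ) (f x))
                + (f x * (starRingEnd ℂ) (f x)) / (x:ℂ)
                + (x:ℂ) * (deriv f x * (starRingEnd ℂ) (deriv f x)) := by
            rw [hg_eq x]
            field_simp
            ring
          rw [hcc]
          rw [Complex.add_re, Complex.add_re, Complex.re_ofReal_mul, Complex.re_ofReal_mul,
            Complex.mul_conj]
          rw [show ((Complex.normSq (f x) : ℝ) : ℂ) / (x:ℂ)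
              = (((Complex.normSq (f x) / x : ℝ)) : ℂ) by push_cast; ring]
          rw [Complex.ofReal_re, ← norm_sq_eq_re']
          have : ‖f x‖^2 = Complex.normSq (f x) := by
            rw [Complex.sq_norm]
          rw [this]
          ring
        rw [← hc]
        exact hinner
      have hiw : IntervalIntegrable (fun r => r * ((g r) * (starRingEnd ℂ) (f r)).re
          + ‖f r‖^2 / r + ‖deriv f r‖^2 * r) volume ε 1 :=
        (by rw [uIcc_of_le hε1]; exact (chG.add ch2).add ch3 :
          ContinuousOn _ (uIcc ε 1)).intervalIntegrable
      have := intervalIntegral.integral_eq_sub_of_hasDerivAt hdw hiw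
      rwa [intervalIntegral.integral_of_le hε1, integral_Ioc_eq_integral_Ioo] at this
    have split2 : (∫ r in Ioo ε 1, r * ((g r) * (starRingEnd ℂ) (f r)).re)
        + (∫ r in Ioo ε 1, ‖f r‖^2 / r) + (∫ r in Ioo ε 1, ‖deriv f r‖^2 * r)
        = (((1:ℝ):ℂ) * deriv f 1 * (starRingEnd ℂ) (f 1)).re
          - ((ε:ℂ) * deriv f ε * (starRingEnd ℂ) (f ε)).re := by
      have iB : IntegrableOn (fun r => r * ((g r) * (starRingEnd ℂ) (f r)).re
          + ‖f r‖^2 / r) (Ioo ε 1) := iG.add i2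
      rw [← key2, integral_add iB i3, integral_add iG i2]
    -- bound on the cross term
    have iFG : IntegrableOn (fun r => (‖f r‖^2 + ‖g r‖^2) * r) (Ioo (0:ℝ) 1) := by
      refine hRint.mono' ?_ ?_
      · have hsub : Ioo (0:ℝ) 1 ⊆ Ioi 0 := Ioo_subset_Ioi_self
        exact ((((hfc.mono hsub).norm.pow 2).add ((hgc.mono hsub).norm.pow 2)).mul
          continuousOn_id).aestronglyMeasurable measurableSet_Ioo
      · rw [ae_restrict_iff' measurableSet_Ioo]
        filter_upwards with r hr
        have h0 : (0:ℝ) ≤ ‖f r‖^2 + ‖g r‖^2 := by positivity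
        rw [Real.norm_eq_abs, abs_of_nonneg (mul_nonneg h0 hr.1.le)]
        have : (0:ℝ) ≤ ‖φ r‖^2 := by positivity
        nlinarith [hr.1.le]
      -- ∫ (|f|²+|g|²) r over (0,1) is at most R
    have hFGR : (∫ r in Ioo (0:ℝ) 1, (‖f r‖^2 + ‖g r‖^2) * r) ≤ R := by
      refine setIntegral_mono_on iFG hRint measurableSet_Ioo ?_
      intro r hr
      have : (0:ℝ) ≤ ‖φ r‖^2 := by positivity
      nlinarith [hr.1.le]
    have hGbound : -(∫ r in Ioo ε 1, r * ((g r) * (starRingEnd ℂ) (f r)).re) ≤ R/2 := by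
      have hneg : -(∫ r in Ioo ε 1, r * ((g r) * (starRingEnd ℂ) (f r)).re)
          = ∫ r in Ioo ε 1, -(r * ((g r) * (starRingEnd ℂ) (f r)).re) := by
        rw [integral_neg]
      rw [hneg]
      have hmaj : (∫ r in Ioo ε 1, -(r * ((g r) * (starRingEnd ℂ) (f r)).re))
          ≤ ∫ r in Ioo ε 1, (1/2) * ((‖f r‖^2 + ‖g r‖^2) * r) := by
        refine setIntegral_mono_on iG.neg ?_ measurableSet_Ioo ?_
        · exact ((iFG.mono_set hsubO01).const_mul (1/2))
        · intro r hr
          have hrpos : (0:ℝ) < r := hsubO hr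
          have h1 := abs_re_mul_conj (g r) (f r)
          have h2 : -(((g r) * (starRingEnd ℂ) (f r)).re) ≤ ‖g r‖ * ‖f r‖ :=
            (neg_le_abs _).trans h1
          nlinarith [sq_nonneg (‖f r‖ - ‖g r‖), mul_le_mul_of_nonneg_left h2 hrpos.le]
      refine hmaj.trans ?_
      rw [integral_const_mul]
      have : (∫ r in Ioo ε 1, (‖f r‖^2 + ‖g r‖^2) * r)
          ≤ ∫ r in Ioo (0:ℝ) 1, (‖f r‖^2 + ‖g r‖^2) * r := by
        refine setIntegral_mono_set iFG ?_ (HasSubset.Subset.eventuallyLE hsubO01)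
        filter_upwards [ae_restrict_mem measurableSet_Ioo] with r hr
        exact mul_nonneg (by positivity) hr.1.le
      linarith
    -- trace estimates at r = 1
    have cfH : ContinuousOn f (Icc (1/2:ℝ) 1) := hfc.mono hsubH
    have cf'H : ContinuousOn (deriv f) (Icc (1/2:ℝ) 1) := hf'c.mono hsubH
    have cf''H : ContinuousOn (deriv (deriv f)) (Icc (1/2:ℝ) 1) := hf''c.mono hsubH
    have cgH : ContinuousOn g (Icc (1/2:ℝ) 1) := hgc.mono hsubH
    have iJ2 : IntegrableOn (fun r => ‖f r‖^2) (Ioo (1/2:ℝ) 1) :=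
      ((cfH.norm.pow 2).integrableOn_Icc).mono_set Ioo_subset_Icc_self
    have iJ3 : IntegrableOn (fun r => ‖deriv f r‖^2) (Ioo (1/2:ℝ) 1) :=
      ((cf'H.norm.pow 2).integrableOn_Icc).mono_set Ioo_subset_Icc_self
    have iJ4 : IntegrableOn (fun r => ‖deriv (deriv f) r‖^2) (Ioo (1/2:ℝ) 1) :=
      ((cf''H.norm.pow 2).integrableOn_Icc).mono_set Ioo_subset_Icc_self
    have iJg : IntegrableOn (fun r => ‖g r‖^2) (Ioo (1/2:ℝ) 1) :=
      ((cgH.norm.pow 2).integrableOn_Icc).mono_set Ioo_subset_Icc_self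
    have hhalf : (1/2:ℝ) ≤ 1 := by norm_num
    -- generic trace lemma, applied to f and deriv f
    have trace : ∀ (u : ℝ → ℂ), (∀ x ∈ Ioi (0:ℝ), HasDerivAt u (deriv u x) x) →
        ContinuousOn (fun r => 2*((deriv u r) * (starRingEnd ℂ) (u r)).re) (Icc (1/2:ℝ) 1) →
        ‖u 1‖^2 = ∫ r in Ioo (1/2:ℝ) 1,
          (2*‖u r‖^2 + (2*r-1) * (2*((deriv u r) * (starRingEnd ℂ) (u r)).re)) := by
      intro u hud hucont
      have hd : ∀ x ∈ uIcc (1/2:ℝ) 1, HasDerivAt (fun r => (2*r-1)*‖u r‖^2)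
          (2*‖u x‖^2 + (2*x-1) * (2*((deriv u x) * (starRingEnd ℂ) (u x)).re)) x := by
        intro x hx
        rw [uIcc_of_le hhalf] at hx
        have hlin : HasDerivAt (fun r : ℝ => 2*r-1) 2 x := by
          simpa using ((hasDerivAt_id x).const_mul (2:ℝ)).sub_const (1:ℝ)
        exact hlin.mul (hasDerivAt_norm_sq (hud x (hsubH hx)))
      have hi : IntervalIntegrable (fun x => 2*‖u x‖^2
          + (2*x-1) * (2*((deriv u x) * (starRingEnd ℂ) (u x)).re)) volume (1/2) 1 := by
        refine (?_ : ContinuousOn _ (uIcc (1/2:ℝ) 1)).intervalIntegrable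
        rw [uIcc_of_le hhalf]
        have cu : ContinuousOn u (Icc (1/2:ℝ) 1) := by
          intro x hx
          exact ((hud x (hsubH hx)).continuousAt).continuousWithinAt
        exact (continuousOn_const.mul (cu.norm.pow 2)).add
          ((continuousOn_const.mul continuousOn_id |>.sub continuousOn_const).mul hucont)
      have := intervalIntegral.integral_eq_sub_of_hasDerivAt hd hi
      rw [intervalIntegral.integral_of_le hhalf, integral_Ioc_eq_integral_Ioo] at this
      rw [this]
      norm_num
    have ctrf : ContinuousOn (fun r => 2*((deriv f r) * (starRingEnd ℂ) (f r)).re)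
        (Icc (1/2:ℝ) 1) := cmid.mono (Icc_subset_Icc (by linarith) le_rfl)
    have ctrf' : ContinuousOn (fun r => 2*((deriv (deriv f) r) * (starRingEnd ℂ) (deriv f r)).re)
        (Icc (1/2:ℝ) 1) :=
      continuousOn_const.mul (Complex.continuous_re.comp_continuousOn
        (cf''H.mul (continuous_star.comp_continuousOn cf'H)))
    have ha2 : ‖f 1‖^2 ≤ 970 * (∫ r in Ioo (1/2:ℝ) 1, ‖f r‖^2)
        + (1/968) * (∫ r in Ioo (1/2:ℝ) 1, ‖deriv f r‖^2) := by
      rw [trace f hfd ctrf]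
      have hmono : (∫ r in Ioo (1/2:ℝ) 1,
            (2*‖f r‖^2 + (2*r-1) * (2*((deriv f r) * (starRingEnd ℂ) (f r)).re)))
          ≤ ∫ r in Ioo (1/2:ℝ) 1, (970 * ‖f r‖^2 + (1/968) * ‖deriv f r‖^2) := by
        refine setIntegral_mono_on ?_ ((iJ2.const_mul 970).add (iJ3.const_mul (1/968)))
          measurableSet_Ioo ?_
        · refine ((iJ2.const_mul 2).add ?_)
          have : ContinuousOn (fun r => (2*r-1) *
              (2*((deriv f r) * (starRingEnd ℂ) (f r)).re)) (Icc (1/2:ℝ) 1) :=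
            ((continuousOn_const.mul continuousOn_id).sub continuousOn_const).mul ctrf
          exact (this.integrableOn_Icc).mono_set Ioo_subset_Icc_self
        · intro r hr
          have h1 := abs_re_mul_conj (deriv f r) (f r)
          have h2 : (2*r-1) * (2*((deriv f r) * (starRingEnd ℂ) (f r)).re)
              ≤ 2 * (‖deriv f r‖ * ‖f r‖) := by
            have hb : ((deriv f r) * (starRingEnd ℂ) (f r)).re ≤ ‖deriv f r‖ * ‖f r‖ :=
              (le_abs_self _).trans h1
            have hb2 : -(‖deriv f r‖ * ‖f r‖) ≤ ((deriv f r) * (starRingEnd ℂ) (f r)).re :=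
              neg_le_of_neg_le ((neg_le_abs _).trans h1)
            nlinarith [hr.1, hr.2]
          nlinarith [sq_nonneg (968 * ‖f r‖ - ‖deriv f r‖), norm_nonneg (f r),
            norm_nonneg (deriv f r)]
      calc (∫ r in Ioo (1/2:ℝ) 1,
            (2*‖f r‖^2 + (2*r-1) * (2*((deriv f r) * (starRingEnd ℂ) (f r)).re)))
          ≤ ∫ r in Ioo (1/2:ℝ) 1, (970 * ‖f r‖^2 + (1/968) * ‖deriv f r‖^2) := hmono
        _ = 970 * (∫ r in Ioo (1/2:ℝ) 1, ‖f r‖^2)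
            + (1/968) * (∫ r in Ioo (1/2:ℝ) 1, ‖deriv f r‖^2) := by
            rw [integral_add (iJ2.const_mul 970) (iJ3.const_mul (1/968)),
              integral_const_mul, integral_const_mul]
    have hb2 : ‖deriv f 1‖^2 ≤ 3 * (∫ r in Ioo (1/2:ℝ) 1, ‖deriv f r‖^2)
        + (∫ r in Ioo (1/2:ℝ) 1, ‖deriv (deriv f) r‖^2) := by
      rw [trace (deriv f) hf'd ctrf']
      have hmono : (∫ r in Ioo (1/2:ℝ) 1, (2*‖deriv f r‖^2
            + (2*r-1) * (2*((deriv (deriv f) r) * (starRingEnd ℂ) (deriv f r)).re)))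
          ≤ ∫ r in Ioo (1/2:ℝ) 1, (3 * ‖deriv f r‖^2 + ‖deriv (deriv f) r‖^2) := by
        refine setIntegral_mono_on ?_ ((iJ3.const_mul 3).add iJ4) measurableSet_Ioo ?_
        · refine ((iJ3.const_mul 2).add ?_)
          have : ContinuousOn (fun r => (2*r-1) *
              (2*((deriv (deriv f) r) * (starRingEnd ℂ) (deriv f r)).re)) (Icc (1/2:ℝ) 1) :=
            ((continuousOn_const.mul continuousOn_id).sub continuousOn_const).mul ctrf'
          exact (this.integrableOn_Icc).mono_set Ioo_subset_Icc_self
        · intro r hr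
          have h1 := abs_re_mul_conj (deriv (deriv f) r) (deriv f r)
          have hb : ((deriv (deriv f) r) * (starRingEnd ℂ) (deriv f r)).re
              ≤ ‖deriv (deriv f) r‖ * ‖deriv f r‖ := (le_abs_self _).trans h1
          have hb2 : -(‖deriv (deriv f) r‖ * ‖deriv f r‖)
              ≤ ((deriv (deriv f) r) * (starRingEnd ℂ) (deriv f r)).re :=
            neg_le_of_neg_le ((neg_le_abs _).trans h1)
          nlinarith [hr.1, hr.2, sq_nonneg (‖deriv f r‖ - ‖deriv (deriv f) r‖),
            norm_nonneg (deriv f r), norm_nonneg (deriv (deriv f) r)]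
      refine hmono.trans ?_
      rw [integral_add (iJ3.const_mul 3) iJ4, integral_const_mul]
    -- bound on ∫ |f''|² over (1/2,1)
    have hJ4 : (∫ r in Ioo (1/2:ℝ) 1, ‖deriv (deriv f) r‖^2)
        ≤ 3 * (∫ r in Ioo (1/2:ℝ) 1, ‖g r‖^2) + 12 * (∫ r in Ioo (1/2:ℝ) 1, ‖deriv f r‖^2)
          + 48 * (∫ r in Ioo (1/2:ℝ) 1, ‖f r‖^2) := by
      have hmono : (∫ r in Ioo (1/2:ℝ) 1, ‖deriv (deriv f) r‖^2)
          ≤ ∫ r in Ioo (1/2:ℝ) 1, (3*‖g r‖^2 + 12*‖deriv f r‖^2 + 48*‖f r‖^2) := by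
        refine setIntegral_mono_on iJ4
          (((iJg.const_mul 3).add (iJ3.const_mul 12)).add (iJ2.const_mul 48))
          measurableSet_Ioo ?_
        intro r hr
        have hrpos : (0:ℝ) < r := lt_trans one_half_pos hr.1
        have hrne : (r:ℂ) ≠ 0 := Complex.ofReal_ne_zero.mpr (ne_of_gt hrpos)
        have hf''eq : deriv (deriv f) r = g r - deriv f r / (r:ℂ) + f r / (r:ℂ)^2 := by
          rw [hg_eq r]; ring
        have hn1 : ‖deriv f r / (r:ℂ)‖ ≤ 2 * ‖deriv f r‖ := by
          rw [norm_div, Complex.norm_real, Real.norm_eq_abs, abs_of_pos hrpos,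
            div_le_iff₀ hrpos]
          nlinarith [hr.1, norm_nonneg (deriv f r)]
        have hn2 : ‖f r / (r:ℂ)^2‖ ≤ 4 * ‖f r‖ := by
          rw [norm_div, norm_pow, Complex.norm_real, Real.norm_eq_abs, abs_of_pos hrpos,
            div_le_iff₀ (by positivity : (0:ℝ) < r^2)]
          nlinarith [hr.1, norm_nonneg (f r),
            mul_nonneg (norm_nonneg (f r)) (sq_nonneg (2*r - 1)),
            mul_nonneg (norm_nonneg (f r)) (by linarith [hr.1] : (0:ℝ) ≤ 4*r - 2)]
        have hn : ‖deriv (deriv f) r‖ ≤ ‖g r‖ + 2*‖deriv f r‖ + 4*‖f r‖ := by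
          rw [hf''eq]
          refine (norm_add_le _ _).trans ?_
          have := (norm_sub_le (g r) (deriv f r / (r:ℂ)))
          linarith
        nlinarith [norm_nonneg (deriv (deriv f) r), norm_nonneg (g r),
          norm_nonneg (deriv f r), norm_nonneg (f r),
          sq_nonneg (‖g r‖ - 2*‖deriv f r‖), sq_nonneg (‖g r‖ - 4*‖f r‖),
          sq_nonneg (2*‖deriv f r‖ - 4*‖f r‖)]
      refine hmono.trans ?_
      have iC : IntegrableOn (fun r => 3*‖g r‖^2 + 12*‖deriv f r‖^2) (Ioo (1/2:ℝ) 1) :=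
        (iJg.const_mul 3).add (iJ3.const_mul 12)
      rw [integral_add iC (iJ2.const_mul 48),
        integral_add (iJg.const_mul 3) (iJ3.const_mul 12),
        integral_const_mul, integral_const_mul, integral_const_mul]
    -- comparisons with R and A3
    have hcmpR : ∀ (u : ℝ → ℂ), u = f ∨ u = g →
        (∫ r in Ioo (1/2:ℝ) 1, ‖u r‖^2) ≤ 2 * R := by
      intro u hu
      have iJu : IntegrableOn (fun r => ‖u r‖^2) (Ioo (1/2:ℝ) 1) := by
        rcases hu with h | h <;> subst h
        · exact iJ2
        · exact iJg
      have h1 : (∫ r in Ioo (1/2:ℝ) 1, ‖u r‖^2)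
          ≤ ∫ r in Ioo (1/2:ℝ) 1, 2 * ((‖φ r‖^2 + ‖f r‖^2 + ‖g r‖^2) * r) := by
        refine setIntegral_mono_on iJu
          ((hRint.mono_set (Ioo_subset_Ioo one_half_pos.le le_rfl)).const_mul 2)
          measurableSet_Ioo ?_
        intro r hr
        have h2r : (1:ℝ) ≤ 2 * r := by nlinarith [hr.1]
        have hterm : ‖u r‖^2 ≤ ‖φ r‖^2 + ‖f r‖^2 + ‖g r‖^2 := by
          rcases hu with h | h <;> subst h
          · nlinarith [norm_nonneg (φ r), norm_nonneg (g r), sq_nonneg (‖φ r‖),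
              sq_nonneg (‖g r‖)]
          · nlinarith [sq_nonneg (‖φ r‖), sq_nonneg (‖f r‖)]
        have hS : (0:ℝ) ≤ ‖φ r‖^2 + ‖f r‖^2 + ‖g r‖^2 := by positivity
        nlinarith
      have h2 : (∫ r in Ioo (1/2:ℝ) 1, 2 * ((‖φ r‖^2 + ‖f r‖^2 + ‖g r‖^2) * r))
          = 2 * ∫ r in Ioo (1/2:ℝ) 1, ((‖φ r‖^2 + ‖f r‖^2 + ‖g r‖^2) * r) :=
        integral_const_mul 2 _
      have h3 : (∫ r in Ioo (1/2:ℝ) 1, ((‖φ r‖^2 + ‖f r‖^2 + ‖g r‖^2) * r)) ≤ R := by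
        refine setIntegral_mono_set hRint ?_
          (HasSubset.Subset.eventuallyLE (Ioo_subset_Ioo one_half_pos.le le_rfl))
        filter_upwards [ae_restrict_mem measurableSet_Ioo] with r hr
        exact mul_nonneg (by positivity) hr.1.le
      linarith
    have hJ2R := hcmpR f (Or.inl rfl)
    have hJgR := hcmpR g (Or.inr rfl)
    have hJ3A : (∫ r in Ioo (1/2:ℝ) 1, ‖deriv f r‖^2)
        ≤ 2 * (∫ r in Ioo ε 1, ‖deriv f r‖^2 * r) := by
      have h1 : (∫ r in Ioo (1/2:ℝ) 1, ‖deriv f r‖^2)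
          ≤ ∫ r in Ioo (1/2:ℝ) 1, 2 * (‖deriv f r‖^2 * r) := by
        refine setIntegral_mono_on iJ3 ((i3.mono_set hsubOH).const_mul 2)
          measurableSet_Ioo ?_
        intro r hr
        nlinarith [hr.1, sq_nonneg (‖deriv f r‖)]
      have h2 : (∫ r in Ioo (1/2:ℝ) 1, 2 * (‖deriv f r‖^2 * r))
          = 2 * ∫ r in Ioo (1/2:ℝ) 1, (‖deriv f r‖^2 * r) := integral_const_mul 2 _
      have h3 : (∫ r in Ioo (1/2:ℝ) 1, (‖deriv f r‖^2 * r))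
          ≤ ∫ r in Ioo ε 1, (‖deriv f r‖^2 * r) := by
        refine setIntegral_mono_set i3 ?_ (HasSubset.Subset.eventuallyLE hsubOH)
        filter_upwards [ae_restrict_mem measurableSet_Ioo] with r hr
        exact mul_nonneg (by positivity) (hsubO hr).le
      linarith
    -- boundary terms
    have hw1 : (((1:ℝ):ℂ) * deriv f 1 * (starRingEnd ℂ) (f 1)).re
        ≤ ‖deriv f 1‖ * ‖f 1‖ := by
      have := (le_abs_self ((deriv f 1 * (starRingEnd ℂ) (f 1)).re)).trans
        (abs_re_mul_conj (deriv f 1) (f 1))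
      simpa using this
    have hwε : -(((ε:ℂ) * deriv f ε * (starRingEnd ℂ) (f ε)).re)
        ≤ ‖(ε:ℂ) * deriv f ε‖ * ‖f ε‖ := by
      have h1 := abs_re_mul_conj ((ε:ℂ) * deriv f ε) (f ε)
      have h2 := (neg_le_abs (((ε:ℂ) * deriv f ε * (starRingEnd ℂ) (f ε)).re)).trans h1
      linarith [h2]
    -- nonnegativity of the three pieces
    have hA2nn : 0 ≤ (∫ r in Ioo ε 1, ‖f r‖^2 / r) :=
      setIntegral_nonneg measurableSet_Ioo
        (fun r hr => div_nonneg (by positivity) (hsubO hr).le)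
    have hA3nn : 0 ≤ (∫ r in Ioo ε 1, ‖deriv f r‖^2 * r) :=
      setIntegral_nonneg measurableSet_Ioo
        (fun r hr => mul_nonneg (by positivity) (hsubO hr).le)
    have hA1nn : 0 ≤ (∫ r in Ioo ε 1, ‖deriv (fun s : ℝ => (s:ℂ) * f s) r‖^2 / r) :=
      setIntegral_nonneg measurableSet_Ioo
        (fun r hr => div_nonneg (by positivity) (hsubO hr).le)
    -- 2ab ≤ b²/120 + 120 a²
    have hab : 2 * (‖deriv f 1‖ * ‖f 1‖) ≤ (1/120) * ‖deriv f 1‖^2 + 120 * ‖f 1‖^2 := by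
      nlinarith [sq_nonneg (‖deriv f 1‖ - 120 * ‖f 1‖)]
    have hcnn : (0:ℝ) ≤ ‖f ε‖^2 := by positivity
    have hτnn : (0:ℝ) ≤ ‖(ε:ℂ) * deriv f ε‖ * ‖f ε‖ :=
      mul_nonneg (norm_nonneg _) (norm_nonneg _)
    linarith
  -- passage to the limit
  have hlim : ∀ h : ℝ → ℝ, (∀ r ∈ Ioo (0:ℝ) 1, 0 ≤ h r) →
      (∀ ε : ℝ, 0 < ε → ε ≤ 1/2 →
        (∫ r in Ioo ε 1, h r) ≤ 469484 * R + 4 * (‖(ε:ℂ) * deriv f ε‖ * ‖f ε‖)) →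
      (∫ r in Ioo (0:ℝ) 1, h r) ≤ 469484 * R := by
    intro h hpos hbound
    by_cases hint : IntegrableOn h (Ioo (0:ℝ) 1)
    · set u : ℕ → ℝ := fun n => ((n:ℝ) + 2)⁻¹ with hu_def
      have hu_pos : ∀ n, 0 < u n := fun n => by positivity
      have hu_le : ∀ n, u n ≤ 1/2 := by
        intro n
        rw [hu_def]
        rw [inv_le_comm₀ (by positivity) (by norm_num)]
        push_cast
        linarith [Nat.cast_nonneg (α := ℝ) n]
      have hu0 : Tendsto u atTop (nhds 0) := by
        apply tendsto_inv_atTop_zero.comp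
        exact tendsto_atTop_add_const_right atTop 2 tendsto_natCast_atTop_atTop
      have hu_mem : Tendsto u atTop (nhdsWithin (0:ℝ) (Ioi 0)) :=
        tendsto_nhdsWithin_of_tendsto_nhds_of_eventually_within _ hu0
          (Eventually.of_forall fun n => hu_pos n)
      have hmono : Monotone (fun n => Ioo (u n) 1) := by
        intro n m hnm
        refine Ioo_subset_Ioo ?_ le_rfl
        rw [hu_def]
        apply inv_anti₀ (by positivity)
        push_cast
        exact add_le_add_left (Nat.cast_le.mpr hnm) 2
      have hUnion : (⋃ n, Ioo (u n) 1) = Ioo (0:ℝ) 1 := by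
        ext x
        simp only [mem_iUnion, mem_Ioo]
        constructor
        · rintro ⟨n, h1, h2⟩
          exact ⟨lt_trans (hu_pos n) h1, h2⟩
        · rintro ⟨h1, h2⟩
          obtain ⟨n, hn⟩ := exists_nat_gt (1/x)
          refine ⟨n, ?_, h2⟩
          rw [hu_def, inv_lt_comm₀ (by positivity) h1]
          rw [one_div] at hn
          push_cast
          linarith
      have htend : Tendsto (fun n => ∫ r in Ioo (u n) 1, h r) atTop
          (nhds (∫ r in Ioo (0:ℝ) 1, h r)) := by
        have := tendsto_setIntegral_of_monotone (fun n => measurableSet_Ioo) hmono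
          (by rw [hUnion]; exact hint)
        rwa [hUnion] at this
      have hrhs : Tendsto (fun n => 469484 * R + 4 * (‖((u n : ℝ):ℂ) * deriv f (u n)‖ * ‖f (u n)‖))
          atTop (nhds (469484 * R)) := by
        have h4 : Tendsto (fun n => ‖((u n : ℝ):ℂ) * deriv f (u n)‖ * ‖f (u n)‖)
            atTop (nhds 0) := hτ0.comp hu_mem
        have := tendsto_const_nhds (α := ℕ) (x := 469484 * R) |>.add (h4.const_mul 4)
        simpa using this
      exact le_of_tendsto_of_tendsto' htend hrhs
        (fun n => hbound (u n) (hu_pos n) (hu_le n))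
    · rw [integral_undef hint]
      exact mul_nonneg (by norm_num) hR0
  -- apply the limit lemma to each of the three terms
  have hnn : ∀ (X : ℝ → ℝ) (s : Set ℝ), (∀ r ∈ s, 0 ≤ X r) → MeasurableSet s →
      0 ≤ ∫ r in s, X r := fun X s h hs => setIntegral_nonneg hs h
  have hT1 : (∫ r in Ioo (0:ℝ) 1, ‖deriv (fun s : ℝ => (s:ℂ) * f s) r‖^2 / r) ≤ 469484 * R := by
    refine hlim _ (fun r hr => div_nonneg (by positivity) hr.1.le) ?_
    intro ε hε hε2
    have h2 := hnn (fun r => ‖f r‖^2 / r) (Ioo ε 1)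
      (fun r hr => div_nonneg (by positivity) (le_trans hε.le hr.1.le)) measurableSet_Ioo
    have h3 := hnn (fun r => ‖deriv f r‖^2 * r) (Ioo ε 1)
      (fun r hr => mul_nonneg (by positivity) (le_trans hε.le hr.1.le)) measurableSet_Ioo
    have := hmain ε hε hε2
    linarith
  have hT2 : (∫ r in Ioo (0:ℝ) 1, ‖f r‖^2 / r) ≤ 469484 * R := by
    refine hlim _ (fun r hr => div_nonneg (by positivity) hr.1.le) ?_
    intro ε hε hε2
    have h1 := hnn (fun r => ‖deriv (fun s : ℝ => (s:ℂ) * f s) r‖^2 / r) (Ioo ε 1)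
      (fun r hr => div_nonneg (by positivity) (le_trans hε.le hr.1.le)) measurableSet_Ioo
    have h3 := hnn (fun r => ‖deriv f r‖^2 * r) (Ioo ε 1)
      (fun r hr => mul_nonneg (by positivity) (le_trans hε.le hr.1.le)) measurableSet_Ioo
    have := hmain ε hε hε2
    linarith
  have hT3 : (∫ r in Ioo (0:ℝ) 1, ‖deriv f r‖^2 * r) ≤ 469484 * R := by
    refine hlim _ (fun r hr => mul_nonneg (by positivity) hr.1.le) ?_
    intro ε hε hε2
    have h1 := hnn (fun r => ‖deriv (fun s : ℝ => (s:ℂ) * f s) r‖^2 / r) (Ioo ε 1)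
      (fun r hr => div_nonneg (by positivity) (le_trans hε.le hr.1.le)) measurableSet_Ioo
    have h2 := hnn (fun r => ‖f r‖^2 / r) (Ioo ε 1)
      (fun r hr => div_nonneg (by positivity) (le_trans hε.le hr.1.le)) measurableSet_Ioo
    have := hmain ε hε hε2
    linarith
  have hfin : (1408452 : ℝ) * R = 469484 * R + 469484 * R + 469484 * R := by ring
  rw [hfin]
  exact add_le_add (add_le_add hT1 hT2) hT3
end

section
/- Let g ∈ C¹([0,1], ℂ) with g(0) = 0. Then ∫₀¹ |g(r)|² dr ≤ (1/2) ∫₀¹ |g'(r)|² (1 − r²) dr. Moreover, there exists a constant C > 0, independent of g, such that ∫₀¹ |g(r)|² r dr ≤ C ∫₀¹ |(d/dr)(r g(r))|² ((1 − r²)/r) dr. -/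
/-!
By the fundamental theorem of calculus and Cauchy–Schwarz, a `C¹` function `f` with `f 0 = 0`
satisfies `‖f r‖² ≤ r ∫₀ʳ ‖f'‖²`. Integrating this against `r` (for `f = g`), resp. against `1`
after dividing by `r` (for `f = r g`), and integrating by parts gives `½ ∫₀¹ ‖g'‖² (1 - r²)`,
resp. `∫₀¹ ‖(r g)'‖² (1 - r)`; since `1 - r ≤ (1 - r²) / r` on `(0, 1)`, the constant `C = 1`
works. The last comparison needs the singular weight to be integrable, which follows from
`‖(r g)'(r)‖ ≤ 2 r sup ‖g'‖`.
-/

open MeasureTheory Set Filter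

theorem sq_intervalIntegral_le_mul_intervalIntegral_sq {φ : ℝ → ℝ} {a b : ℝ} (hab : a ≤ b)
    (hφ : IntervalIntegrable φ volume a b)
    (hφ2 : IntervalIntegrable (fun x => φ x ^ 2) volume a b) :
    (∫ x in a..b, φ x) ^ 2 ≤ (b - a) * ∫ x in a..b, φ x ^ 2 := by
  rcases hab.eq_or_lt with rfl | hlt
  · simp
  have jensen := (even_two.convexOn_pow (𝕜 := ℝ)).map_set_average_le (continuousOn_pow 2)
    isClosed_univ (by simp [hlt]) (by simp) (Eventually.of_forall fun x => mem_univ (φ x))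
    hφ.1 hφ2.1
  have hba : 0 < b - a := sub_pos.2 hlt
  rw [setAverage_eq, setAverage_eq, measureReal_def, Real.volume_Ioc,
    ENNReal.toReal_ofReal hba.le, smul_eq_mul, smul_eq_mul, mul_pow] at jensen
  rw [intervalIntegral.integral_of_le hab, intervalIntegral.integral_of_le hab]
  have := mul_le_mul_of_nonneg_left jensen (sq_nonneg (b - a))
  field_simp at this
  simpa [Function.comp_def] using this

theorem norm_sub_sq_le_mul_intervalIntegral_norm_deriv_sq {E : Type*} [NormedAddCommGroup E]
    [NormedSpace ℝ E] [CompleteSpace E] {f : ℝ → E} (hf : ContDiff ℝ 1 f) {a b : ℝ}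
    (hab : a ≤ b) :
    ‖f b - f a‖ ^ 2 ≤ (b - a) * ∫ x in a..b, ‖deriv f x‖ ^ 2 := by
  have hf' : Continuous (deriv f) := hf.continuous_deriv le_rfl
  have ftc : f b - f a = ∫ x in a..b, deriv f x :=
    (intervalIntegral.integral_deriv_eq_sub
      (fun x _ => (hf.differentiable one_ne_zero).differentiableAt)
      (hf'.intervalIntegrable _ _)).symm
  calc ‖f b - f a‖ ^ 2 ≤ (∫ x in a..b, ‖deriv f x‖) ^ 2 := by
        rw [ftc]
        gcongr
        exact intervalIntegral.norm_integral_le_integral_norm hab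
    _ ≤ (b - a) * ∫ x in a..b, ‖deriv f x‖ ^ 2 :=
        sq_intervalIntegral_le_mul_intervalIntegral_sq hab (hf'.norm.intervalIntegrable _ _)
          ((hf'.norm.pow 2).intervalIntegrable _ _)

theorem intervalIntegral_mul_primitive_eq {F w W : ℝ → ℝ} {a b : ℝ} (hF : Continuous F)
    (hW : ∀ x ∈ uIcc a b, HasDerivAt W (w x) x) (hw : IntervalIntegrable w volume a b) :
    ∫ x in a..b, w x * ∫ t in a..x, F t = ∫ x in a..b, F x * (W b - W x) := by
  have parts := intervalIntegral.integral_mul_deriv_eq_deriv_mul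
    (fun x _ => (hF.integral_hasStrictDerivAt a x).hasDerivAt) hW (hF.intervalIntegrable a b) hw
  have hFW : IntervalIntegrable (fun x => F x * W x) volume a b :=
    (hF.continuousOn.mul (HasDerivAt.continuousOn hW)).intervalIntegrable
  simp only [intervalIntegral.integral_same, zero_mul, sub_zero] at parts
  simp only [mul_sub, mul_comm (w _)]
  rw [parts, intervalIntegral.integral_sub ((hF.intervalIntegrable a b).mul_const _) hFW,
    intervalIntegral.integral_mul_const]

section

variable {E : Type*} [NormedAddCommGroup E] [NormedSpace ℝ E] {g : ℝ → E}

theorem integral_norm_sq_le_half_integral_norm_deriv_sq_mul [CompleteSpace E]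
    (hg : ContDiff ℝ 1 g) (hg0 : g 0 = 0) :
    ∫ r in Ioo (0 : ℝ) 1, ‖g r‖ ^ 2 ≤
      (1 / 2) * ∫ r in Ioo (0 : ℝ) 1, ‖deriv g r‖ ^ 2 * (1 - r ^ 2) := by
  have hF : Continuous fun s => ‖deriv g s‖ ^ 2 := (hg.continuous_deriv le_rfl).norm.pow 2
  have hW (x : ℝ) : HasDerivAt (fun r : ℝ => r ^ 2 / 2) x x := by
    simpa using (hasDerivAt_pow 2 x).div_const 2
  calc ∫ r in Ioo (0 : ℝ) 1, ‖g r‖ ^ 2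
      ≤ ∫ r in Ioo (0 : ℝ) 1, r * ∫ s in (0 : ℝ)..r, ‖deriv g s‖ ^ 2 := by
        refine setIntegral_mono_on ?_ ?_ measurableSet_Ioo fun r hr => ?_
        · exact (hg.continuous.norm.pow 2).integrableOn_Icc.mono_set Ioo_subset_Icc_self
        · exact (continuous_id.mul (intervalIntegral.continuous_primitive
            hF.intervalIntegrable 0)).integrableOn_Icc.mono_set Ioo_subset_Icc_self
        · simpa [hg0] using norm_sub_sq_le_mul_intervalIntegral_norm_deriv_sq hg hr.1.le
    _ = ∫ r in Ioo (0 : ℝ) 1, ‖deriv g r‖ ^ 2 * (1 ^ 2 / 2 - r ^ 2 / 2) := by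
        simp only [← integral_Ioc_eq_integral_Ioo, ← intervalIntegral.integral_of_le zero_le_one]
        exact intervalIntegral_mul_primitive_eq hF (fun x _ => hW x)
          (continuous_id.intervalIntegrable 0 1)
    _ = (1 / 2) * ∫ r in Ioo (0 : ℝ) 1, ‖deriv g r‖ ^ 2 * (1 - r ^ 2) := by
        rw [← integral_const_mul]
        congr 1 with r
        ring

theorem norm_le_mul_of_norm_deriv_le (hg : Differentiable ℝ g) (hg0 : g 0 = 0) {M r : ℝ}
    (hr : 0 ≤ r) (hM : ∀ s ∈ Icc 0 r, ‖deriv g s‖ ≤ M) : ‖g r‖ ≤ M * r := by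
  simpa [hg0] using norm_image_sub_le_of_norm_deriv_le_segment'
    (fun x _ => (hg x).hasDerivAt.hasDerivWithinAt) (fun x hx => hM x (Ico_subset_Icc_self hx))
    r ⟨hr, le_rfl⟩

theorem norm_deriv_smul_self_le (hg : Differentiable ℝ g) (hg0 : g 0 = 0) {M r : ℝ}
    (hr : 0 ≤ r) (hM : ∀ s ∈ Icc 0 r, ‖deriv g s‖ ≤ M) :
    ‖deriv (fun s => s • g s) r‖ ≤ 2 * M * r := by
  rw [deriv_fun_smul (c := fun s => s) differentiableAt_id (hg r), deriv_id'', one_smul]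
  calc ‖r • deriv g r + g r‖ ≤ r * ‖deriv g r‖ + ‖g r‖ := by
        simpa [norm_smul, abs_of_nonneg hr] using norm_add_le (r • deriv g r) (g r)
    _ ≤ r * M + M * r := by
        gcongr
        · exact hM r ⟨hr, le_rfl⟩
        · exact norm_le_mul_of_norm_deriv_le hg hg0 hr hM
    _ = 2 * M * r := by ring

theorem integrableOn_norm_deriv_smul_self_sq_mul (hg : ContDiff ℝ 1 g) (hg0 : g 0 = 0) :
    IntegrableOn (fun r => ‖deriv (fun s => s • g s) r‖ ^ 2 * ((1 - r ^ 2) / r)) (Ioo 0 1) := by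
  obtain ⟨M, hM⟩ := isCompact_Icc.exists_bound_of_continuousOn
    (hg.continuous_deriv le_rfl).continuousOn (s := Icc (0 : ℝ) 1)
  have hh' : Continuous (deriv fun s => s • g s) :=
    (contDiff_id.smul hg).continuous_deriv le_rfl
  refine Measure.integrableOn_of_bounded (M := (2 * M) ^ 2) measure_Ioo_lt_top.ne
    ((hh'.norm.pow 2).aestronglyMeasurable.mul (by fun_prop : Measurable _).aestronglyMeasurable)
    (ae_restrict_of_forall_mem measurableSet_Ioo fun r ⟨hr0, hr1⟩ => ?_)
  have hbound := norm_deriv_smul_self_le (hg.differentiable one_ne_zero) hg0 hr0.le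
    fun s hs => hM s ⟨hs.1, hs.2.trans hr1.le⟩
  have hr2 : 0 ≤ 1 - r ^ 2 := by nlinarith
  rw [Real.norm_of_nonneg (by positivity)]
  calc ‖deriv (fun s => s • g s) r‖ ^ 2 * ((1 - r ^ 2) / r)
      ≤ (2 * M * r) ^ 2 * ((1 - r ^ 2) / r) := by gcongr
    _ = (2 * M) ^ 2 * (r * (1 - r ^ 2)) := by field_simp
    _ ≤ (2 * M) ^ 2 * 1 := by gcongr; nlinarith
    _ = (2 * M) ^ 2 := mul_one _

theorem integral_norm_sq_mul_le_integral_norm_deriv_smul_self_sq_mul [CompleteSpace E]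
    (hg : ContDiff ℝ 1 g) (hg0 : g 0 = 0) :
    ∫ r in Ioo (0 : ℝ) 1, ‖g r‖ ^ 2 * r ≤
      ∫ r in Ioo (0 : ℝ) 1, ‖deriv (fun s => s • g s) r‖ ^ 2 * ((1 - r ^ 2) / r) := by
  have hh : ContDiff ℝ 1 fun s => s • g s := contDiff_id.smul hg
  have hΦ : Continuous fun s => ‖deriv (fun s => s • g s) s‖ ^ 2 :=
    (hh.continuous_deriv le_rfl).norm.pow 2
  calc ∫ r in Ioo (0 : ℝ) 1, ‖g r‖ ^ 2 * r
      ≤ ∫ r in Ioo (0 : ℝ) 1, 1 * ∫ s in (0 : ℝ)..r, ‖deriv (fun s => s • g s) s‖ ^ 2 := by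
        refine setIntegral_mono_on ?_ ?_ measurableSet_Ioo fun r hr => ?_
        · exact ((hg.continuous.norm.pow 2).mul continuous_id).integrableOn_Icc.mono_set
            Ioo_subset_Icc_self
        · exact (continuous_const.mul (intervalIntegral.continuous_primitive
            hΦ.intervalIntegrable 0)).integrableOn_Icc.mono_set Ioo_subset_Icc_self
        · have hpoint := norm_sub_sq_le_mul_intervalIntegral_norm_deriv_sq hh hr.1.le
          rw [zero_smul, sub_zero, sub_zero, norm_smul, Real.norm_of_nonneg hr.1.le] at hpoint
          nlinarith [hr.1]
    _ = ∫ r in Ioo (0 : ℝ) 1, ‖deriv (fun s => s • g s) r‖ ^ 2 * (1 - r) := by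
        simp only [← integral_Ioc_eq_integral_Ioo, ← intervalIntegral.integral_of_le zero_le_one]
        exact intervalIntegral_mul_primitive_eq hΦ (fun x _ => hasDerivAt_id x)
          intervalIntegrable_const
    _ ≤ ∫ r in Ioo (0 : ℝ) 1, ‖deriv (fun s => s • g s) r‖ ^ 2 * ((1 - r ^ 2) / r) := by
        refine setIntegral_mono_on ?_ (integrableOn_norm_deriv_smul_self_sq_mul hg hg0)
          measurableSet_Ioo fun r ⟨hr0, hr1⟩ => ?_
        · exact (hΦ.mul (continuous_const.sub continuous_id)).integrableOn_Icc.mono_set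
            Ioo_subset_Icc_self
        · gcongr
          rw [le_div_iff₀ hr0]
          nlinarith

end

theorem stmt_15 :
    ∃ C : ℝ, 0 < C ∧
      ∀ g : ℝ → ℂ,
        ContDiff ℝ 1 g → g 0 = 0 →
        ((∫ r in Ioo (0 : ℝ) 1, ‖g r‖ ^ 2)
            ≤ (1 / 2) * ∫ r in Ioo (0 : ℝ) 1, ‖deriv g r‖ ^ 2 * (1 - r ^ 2))
        ∧ ((∫ r in Ioo (0 : ℝ) 1, ‖g r‖ ^ 2 * r)
            ≤ C * ∫ r in Ioo (0 : ℝ) 1,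
                ‖deriv (fun s : ℝ => (s : ℂ) * g s) r‖ ^ 2 * ((1 - r ^ 2) / r)) := by
  refine ⟨1, one_pos, fun g hg hg0 =>
    ⟨integral_norm_sq_le_half_integral_norm_deriv_sq_mul hg hg0, ?_⟩⟩
  simpa only [Complex.real_smul, one_mul] using
    integral_norm_sq_mul_le_integral_norm_deriv_smul_self_sq_mul hg hg0
end
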